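/- Supp(M/bM) ⊆ V(a) if and only if for every n ∈ ℕ there exists an a-filter regular M-sequence of length n in b. Consequently, if Supp(M/bM) ⊄ V(a), then any two maximal a-filter regular M-sequences in b have the same length. -/

import Mathlib

open CategoryTheory CategoryTheory.Limits Opposite

universe u

noncomputable section

namespace Paper

variable (R : Type u) [CommRing R]

/-- `x` is an `a`-filter regular `M`-sequence. -/
def IsFilterRegular (a : Ideal R) (M : Type u) [AddCommGroup M] [Module R M]
    {n : ℕ} (x : Fin n → R) : Prop :=
  ∀ i : Fin n, ∀ p ∈ associatedPrimes R
      (M ⧸ (Ideal.span (x '' {j | j < i}) • (⊤ : Submodule R M))),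
    ¬ a ≤ p → x i ∉ p

/-- `y` is a weak regular sequence on `X`. -/
def IsWeakRegular (S : Type*) [CommRing S] (X : Type*) [AddCommGroup X] [Module S X]
    {n : ℕ} (y : Fin n → S) : Prop :=
  ∀ i : Fin n, ∀ m : X ⧸ (Ideal.span (y '' {j | j < i}) • (⊤ : Submodule S X)),
    y i • m = 0 → m = 0

/-- The `i`-th Ext module `Ext^i_R(M, N)`. -/
abbrev ExtModule (i : ℕ) (M N : Type u) [AddCommGroup M] [Module R M]
    [AddCommGroup N] [Module R N] : ModuleCat.{u} R :=
  ((Ext R (ModuleCat.{u} R) i).obj (op (ModuleCat.of R M))).obj (ModuleCat.of R N)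

/-- The directed system `M/a^t M`. -/
theorem mapQ_trans {M : Type u} [AddCommGroup M] [Module R M] (p q r : Submodule R M)
    (h1 : p ≤ q) (h2 : q ≤ r) :
    Submodule.mapQ p r LinearMap.id (fun _ hm => h2 (h1 hm)) =
      (Submodule.mapQ q r LinearMap.id (fun _ hm => h2 hm)).comp
        (Submodule.mapQ p q LinearMap.id (fun _ hm => h1 hm)) := by
  ext x
  simp [Submodule.mapQ_apply]

/-- The directed system `M/a^t M`. -/
def quotPowersDiagram (a : Ideal R) (M : Type u) [AddCommGroup M] [Module R M] :
    ℕᵒᵖ ⥤ ModuleCat.{u} R where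
  obj t := ModuleCat.of R (M ⧸ ((a ^ (unop t)) • (⊤ : Submodule R M)))
  map {t t'} w := ModuleCat.ofHom (Submodule.mapQ _ _ LinearMap.id
    (fun m hm => Submodule.smul_mono (Ideal.pow_le_pow_right w.unop.down.down) le_rfl hm))
  map_id t := by apply ModuleCat.hom_ext; apply Submodule.linearMap_qext; rfl
  map_comp {t t' t''} f g := by
    apply ModuleCat.hom_ext
    exact mapQ_trans R _ _ _
      (Submodule.smul_mono (Ideal.pow_le_pow_right f.unop.down.down) le_rfl)
      (Submodule.smul_mono (Ideal.pow_le_pow_right g.unop.down.down) le_rfl)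

/-- The generalized local cohomology module `H^i_a(M, N) = colim_t Ext^i(M/a^t M, N)`. -/
def glc (a : Ideal R) (i : ℕ) (M N : Type u) [AddCommGroup M] [Module R M]
    [AddCommGroup N] [Module R N] : ModuleCat.{u} R :=
  colimit (((quotPowersDiagram R a M).op ⋙ Ext R (ModuleCat.{u} R) i) ⋙
    (evaluation _ _).obj (ModuleCat.of R N))

/-- The `a`-filter grade of `b` on `M`. -/
def filterGrade (a b : Ideal R) (M : Type u) [AddCommGroup M] [Module R M] : ℕ∞ :=
  sSup {n : ℕ∞ | ∃ k : ℕ, n = k ∧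
    ∃ x : Fin k → R, (∀ i, x i ∈ b) ∧ IsFilterRegular R a M x}

/-- `M` has a projective resolution of length at most `d`. -/
def HasProjDimLE (M : Type u) [AddCommGroup M] [Module R M] (d : ℕ) : Prop :=
  ∃ P : ProjectiveResolution (ModuleCat.of R M), ∀ i : ℕ, d < i → IsZero (P.complex.X i)

/-- The projective dimension of `M` (as an element of `ℕ∞`, with `⊤` meaning infinite). -/
def projDim (M : Type u) [AddCommGroup M] [Module R M] : ℕ∞ :=
  sInf {n : ℕ∞ | ∃ k : ℕ, n = k ∧ HasProjDimLE R M k}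

/-- The Krull dimension of a module, `dim M = dim R/Ann M`. -/
def moduleDim (M : Type u) [AddCommGroup M] [Module R M] : WithBot (WithTop ℕ) :=
  ringKrullDim (R ⧸ Module.annihilator R M)

/-- `cd_a(M, N)`: the greatest `i` with `H^i_a(M, N) ≠ 0`. -/
def cohomDim (a : Ideal R) (M N : Type u) [AddCommGroup M] [Module R M]
    [AddCommGroup N] [Module R N] : WithBot ℕ∞ :=
  sSup {i : WithBot ℕ∞ | ∃ k : ℕ, i = (k : ℕ∞) ∧ Nontrivial (glc R a k M N)}

/-- A nonzero module is secondary if every scalar acts surjectively or nilpotently. -/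
def IsSecondary (X : Type*) [AddCommGroup X] [Module R X] : Prop :=
  Nontrivial X ∧ ∀ r : R,
    Function.Surjective (fun x : X => r • x) ∨ r ∈ (Module.annihilator R X).radical

/-- The attached primes of `X`: the radicals of the annihilators of the terms of a
minimal secondary representation of `X`. -/
def attachedPrimes (X : Type u) [AddCommGroup X] [Module R X] : Set (Ideal R) :=
  {p | ∃ (k : ℕ) (S : Fin k → Submodule R X),
    (∀ i, IsSecondary R ↥(S i)) ∧ (⨆ i, S i) = ⊤ ∧
    (Function.Injective fun i => (Module.annihilator R ↥(S i)).radical) ∧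
    (∀ i : Fin k, (⨆ j ∈ {j | j ≠ i}, S j) ≠ ⊤) ∧
    ∃ i, (Module.annihilator R ↥(S i)).radical = p}

end Paper

open Paper CategoryTheory CategoryTheory.Limits

/-!
Localized at a prime `P ⊉ a`, an `a`-filter regular sequence becomes a weak regular sequence.
If `y ⊆ b` is a maximal `a`-filter regular sequence, prime avoidance yields an associated prime
`P` of `M/(y)M` with `a ⊄ P` and `b ⊆ P`, so `(M/(y)M)_P` has a nonzero element killed by `b`;
an exchange argument then shows that no regular sequence in `b` on `M_P` is longer than `y`.
When `Supp(M/bM) ⊆ V(a)` such a prime cannot exist, so every sequence extends; otherwise a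
sequence with maximal span is maximal.
-/

namespace Paper

section LocalRegularity

variable {R M : Type*} [CommRing R] [AddCommGroup M] [Module R M]
  {P b : Ideal R} {K : Submodule R M}

/-- `r` is a nonzerodivisor on the localization `(M ⧸ K)_P`. -/
def IsSMulRegularAt (P : Ideal R) (K : Submodule R M) (r : R) : Prop :=
  ∀ m : M, r • m ∈ K → ∃ s ∉ P, s • m ∈ K

/-- The localization `(M ⧸ K)_P` has a nonzero element killed by `b`. -/
def HasDepthZeroAt (P b : Ideal R) (K : Submodule R M) : Prop :=
  ∃ u : M, (∀ s ∉ P, s • u ∉ K) ∧ ∀ r ∈ b, ∃ s ∉ P, s • r • u ∈ K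

def IsRegularSeqAt (P : Ideal R) (K : Submodule R M) {n : ℕ} (x : Fin n → R) : Prop :=
  ∀ i, IsSMulRegularAt P (K ⊔ Ideal.span (x '' {j | j < i}) • ⊤) (x i)

theorem mem_sup_span_singleton_smul_top {r : R} {m : M} :
    m ∈ K ⊔ Ideal.span {r} • (⊤ : Submodule R M) ↔ ∃ k ∈ K, ∃ n : M, k + r • n = m := by
  simp [Submodule.ideal_span_singleton_smul, Submodule.mem_sup,
    Submodule.mem_smul_pointwise_iff_exists]

theorem HasDepthZeroAt.not_isSMulRegularAt [P.IsPrime] (h : HasDepthZeroAt P b K) {r : R}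
    (hr : r ∈ b) : ¬ IsSMulRegularAt P K r := by
  obtain ⟨u, hu, hbu⟩ := h
  intro hreg
  obtain ⟨s, hs, hsru⟩ := hbu r hr
  obtain ⟨t, ht, hts⟩ := hreg (s • u) (by rwa [smul_comm])
  exact hu (t * s) (‹P.IsPrime›.mul_notMem ht hs) (by rwa [mul_smul])

theorem IsSMulRegularAt.swap [P.IsPrime] {α β : R}
    (hα : IsSMulRegularAt P K α) (hβ : IsSMulRegularAt P (K ⊔ Ideal.span {α} • ⊤) β) :
    IsSMulRegularAt P (K ⊔ Ideal.span {β} • ⊤) α := by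
  intro m hm
  obtain ⟨k, hk, n, hn⟩ := mem_sup_span_singleton_smul_top.mp hm
  obtain ⟨s, hs, hsn⟩ := hβ n <|
    mem_sup_span_singleton_smul_top.mpr ⟨-k, K.neg_mem hk, m, by rw [← hn]; abel⟩
  obtain ⟨k', hk', n₁, hn₁⟩ := mem_sup_span_singleton_smul_top.mp hsn
  obtain ⟨t, ht, htm⟩ := hα (s • m - β • n₁) <| by
    have : α • (s • m - β • n₁) = s • k + β • k' := by
      linear_combination (norm := module) -s • hn - β • hn₁
    rw [this]
    exact K.add_mem (K.smul_mem s hk) (K.smul_mem β hk')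
  refine ⟨t * s, ‹P.IsPrime›.mul_notMem ht hs,
    mem_sup_span_singleton_smul_top.mpr ⟨_, htm, t • n₁, ?_⟩⟩
  module

theorem HasDepthZeroAt.exchange [P.IsPrime] {ξ η : R} (hη : η ∈ b)
    (hξ : IsSMulRegularAt P K ξ) (hη' : IsSMulRegularAt P K η)
    (h : HasDepthZeroAt P b (K ⊔ Ideal.span {ξ} • ⊤)) :
    HasDepthZeroAt P b (K ⊔ Ideal.span {η} • ⊤) := by
  obtain ⟨u, hu, hbu⟩ := h
  obtain ⟨s₁, hs₁, hηu⟩ := hbu η hη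
  -- write `s₁ η u = k₁ + ξ v`; the new witness is `v`
  obtain ⟨k₁, hk₁, v, hv⟩ := mem_sup_span_singleton_smul_top.mp hηu
  refine ⟨v, fun t ht htv => ?_, fun r hr => ?_⟩
  · obtain ⟨k₂, hk₂, v', hv'⟩ := mem_sup_span_singleton_smul_top.mp htv
    obtain ⟨t₂, ht₂, htu⟩ := hη' ((t * s₁) • u - ξ • v') <| by
      have : η • ((t * s₁) • u - ξ • v') = t • k₁ + ξ • k₂ := by
        linear_combination (norm := module) -t • hv - ξ • hv'
      rw [this]
      exact K.add_mem (K.smul_mem t hk₁) (K.smul_mem ξ hk₂)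
    refine hu (t₂ * (t * s₁)) (‹P.IsPrime›.mul_notMem ht₂ (‹P.IsPrime›.mul_notMem ht hs₁))
      (mem_sup_span_singleton_smul_top.mpr ⟨_, htu, t₂ • v', ?_⟩)
    module
  · obtain ⟨s, hs, hsru⟩ := hbu r hr
    obtain ⟨k₃, hk₃, w, hw⟩ := mem_sup_span_singleton_smul_top.mp hsru
    obtain ⟨t, ht, htv⟩ := hξ ((s * r) • v - (s₁ * η) • w) <| by
      have : ξ • ((s * r) • v - (s₁ * η) • w) = (s₁ * η) • k₃ - (s * r) • k₁ := by
        linear_combination (norm := module) (s * r) • hv - (s₁ * η) • hw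
      rw [this]
      exact K.sub_mem (K.smul_mem _ hk₃) (K.smul_mem _ hk₁)
    refine ⟨t * s, ‹P.IsPrime›.mul_notMem ht hs,
      mem_sup_span_singleton_smul_top.mpr ⟨_, htv, (t * s₁) • w, ?_⟩⟩
    module

end LocalRegularity

section AssociatedPrimes

variable {R M : Type*} [CommRing R] [AddCommGroup M] [Module R M]
  {P b : Ideal R} {K : Submodule R M}

theorem bot_colon_mkQ (x : M) : (⊥ : Submodule R (M ⧸ K)).colon {K.mkQ x} = K.colon {x} := by
  ext r
  simp [Submodule.mem_colon_singleton, ← Submodule.Quotient.mk_smul]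

theorem associatedPrimes_quotient : associatedPrimes R (M ⧸ K) = K.associatedPrimes := by
  ext q
  simp only [associatedPrimes, IsAssociatedPrime, Submodule.associatedPrimes, Set.mem_ofPred_eq,
    Submodule.isAssociatedPrime_def, K.mkQ_surjective.exists, bot_colon_mkQ]

theorem exists_mem_associatedPrimes_between [IsNoetherianRing R] [P.IsPrime] {m : M}
    (h : K.colon {m} ≤ P) : ∃ q ∈ K.associatedPrimes, K.colon {m} ≤ q ∧ q ≤ P := by
  obtain ⟨q, hq, hqP⟩ := Ideal.exists_minimalPrimes_le h
  obtain ⟨m', rfl⟩ := Submodule.exists_eq_colon_of_mem_minimalPrimes hq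
  exact ⟨_, (Submodule.isAssociatedPrime_iff).mpr ⟨hq.1.1, m', rfl⟩, hq.1.2, hqP⟩

theorem isSMulRegularAt_iff [IsNoetherianRing R] [P.IsPrime] {r : R} :
    IsSMulRegularAt P K r ↔ ∀ q ∈ K.associatedPrimes, q ≤ P → r ∉ q := by
  constructor
  · intro hr q hq hqP hrq
    obtain ⟨-, x, rfl⟩ := (Submodule.isAssociatedPrime_iff).mp hq
    obtain ⟨s, hs, hsx⟩ := hr x (Submodule.mem_colon_singleton.mp hrq)
    exact hs (hqP (Submodule.mem_colon_singleton.mpr hsx))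
  · intro h m hrm
    by_contra! hm
    obtain ⟨q, hq, hmq, hqP⟩ := exists_mem_associatedPrimes_between (K := K) (m := m)
      fun s hs => not_not.mp fun hsP => hm s hsP (Submodule.mem_colon_singleton.mp hs)
    exact h q hq hqP (hmq (Submodule.mem_colon_singleton.mpr hrm))

theorem hasDepthZeroAt_of_mem_associatedPrimes [IsNoetherianRing R] {q : Ideal R}
    (hq : q ∈ K.associatedPrimes) (hbq : b ≤ q) : HasDepthZeroAt q b K := by
  obtain ⟨hq, u, rfl⟩ := (Submodule.isAssociatedPrime_iff).mp hq
  refine ⟨u, fun s hs hsu => hs (Submodule.mem_colon_singleton.mpr hsu),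
    fun r hr => ⟨1, hq.ne_top ∘ (Ideal.eq_top_iff_one _).mpr, ?_⟩⟩
  rw [one_smul]
  exact Submodule.mem_colon_singleton.mp (hbq hr)

theorem exists_mem_forall_notMem_of_finite {F : Set (Ideal R)} (hF : F.Finite)
    (hprime : ∀ q ∈ F, q.IsPrime) (hb : ∀ q ∈ F, ¬ b ≤ q) : ∃ z ∈ b, ∀ q ∈ F, z ∉ q := by
  by_contra! h
  obtain ⟨q, hq, hbq⟩ := (Ideal.subset_union_prime_finite hF (f := id) ⊥ ⊥
    fun q hq _ _ => hprime q hq).mp fun z hz => by simpa using h z hz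
  exact hb q hq hbq

theorem exists_mem_forall_isSMulRegularAt [IsNoetherianRing R] [Module.Finite R M] [P.IsPrime]
    {ι : Type*} [Finite ι] (N : ι → Submodule R M)
    (h : ∀ i, ∃ r ∈ b, IsSMulRegularAt P (N i) r) :
    ∃ z ∈ b, ∀ i, IsSMulRegularAt P (N i) z := by
  have hF : (⋃ i, {q ∈ (N i).associatedPrimes | q ≤ P}).Finite := Set.finite_iUnion fun i =>
    (associatedPrimes_quotient (K := N i) ▸ associatedPrimes.finite R _).subset fun _ h => h.1
  obtain ⟨z, hzb, hz⟩ := exists_mem_forall_notMem_of_finite hF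
    (fun q hq => (Set.mem_iUnion.mp hq).choose_spec.1.toIsPrime) fun q hq hbq => by
      obtain ⟨i, hq, hqP⟩ := Set.mem_iUnion.mp hq
      obtain ⟨r, hrb, hr⟩ := h i
      exact isSMulRegularAt_iff.mp hr q hq hqP (hbq hrb)
  exact ⟨z, hzb, fun i => isSMulRegularAt_iff.mpr fun q hq hqP =>
    hz q (Set.mem_iUnion.mpr ⟨i, hq, hqP⟩)⟩

theorem mem_support_of_mem_associatedPrimes [IsNoetherianRing R] {q : Ideal R}
    (hq : q ∈ associatedPrimes R M) : ⟨q, hq.isPrime⟩ ∈ Module.support R M := by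
  obtain ⟨-, m, rfl⟩ := isAssociatedPrime_iff.mp hq
  exact Module.mem_support_iff_exists_annihilator.mpr ⟨m, Submodule.bot_colon'.ge⟩

theorem exists_mem_associatedPrimes_le_of_mem_support [IsNoetherianRing R]
    {p : PrimeSpectrum R} (hp : p ∈ Module.support R (M ⧸ K)) :
    ∃ q ∈ K.associatedPrimes, q ≤ p.asIdeal := by
  obtain ⟨m, hm⟩ := Module.mem_support_iff_exists_annihilator.mp hp
  obtain ⟨m, rfl⟩ := K.mkQ_surjective m
  rw [← Submodule.bot_colon', bot_colon_mkQ] at hm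
  obtain ⟨q, hq, -, hqp⟩ := exists_mem_associatedPrimes_between hm
  exact ⟨q, hq, hqp⟩

end AssociatedPrimes

section FinImages

variable {α : Type*} {n : ℕ}

theorem image_lt_castSucc (x : Fin (n + 1) → α) (i : Fin n) :
    x '' {j | j < i.castSucc} = (x ∘ Fin.castSucc) '' {j | j < i} := by
  rw [Set.image_comp]
  exact congrArg _ (Fin.image_castSucc_Iio i).symm

theorem image_lt_succ (x : Fin (n + 1) → α) (i : Fin n) :
    x '' {j | j < i.succ} = insert (x i.castSucc) (x '' {j | j < i.castSucc}) := by
  rw [← Set.image_insert_eq]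
  congr 1
  ext j
  simp only [Set.mem_ofPred_eq, Set.mem_insert_iff, Fin.lt_def, Fin.ext_iff, Fin.val_succ,
    Fin.val_castSucc]
  omega

theorem image_lt_last (x : Fin (n + 1) → α) :
    x '' {j | j < Fin.last n} = Set.range (x ∘ Fin.castSucc) := by
  rw [Set.range_comp, Fin.range_castSucc]
  congr 1

theorem range_eq_insert_image_lt_last (x : Fin (n + 1) → α) :
    Set.range x = insert (x (Fin.last n)) (x '' {j | j < Fin.last n}) := by
  rw [← Set.image_insert_eq, ← Set.image_univ]
  congr 1
  ext j
  simp [Fin.lt_last_iff_ne_last, em]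

theorem forall_snoc_mem {s : Set α} {x : Fin n → α} {z : α} :
    (∀ i, (Fin.snoc x z : Fin (n + 1) → α) i ∈ s) ↔ (∀ i, x i ∈ s) ∧ z ∈ s := by
  simp [Fin.forall_fin_succ']

theorem image_snoc_lt_castSucc (x : Fin n → α) (z : α) (i : Fin n) :
    (Fin.snoc x z : Fin (n + 1) → α) '' {j | j < i.castSucc} = x '' {j | j < i} := by
  rw [image_lt_castSucc, Fin.snoc_comp_castSucc]

theorem image_snoc_lt_last (x : Fin n → α) (z : α) :
    (Fin.snoc x z : Fin (n + 1) → α) '' {j | j < Fin.last n} = Set.range x := by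
  rw [image_lt_last, Fin.snoc_comp_castSucc]

theorem range_snoc (x : Fin n → α) (z : α) :
    Set.range (Fin.snoc x z : Fin (n + 1) → α) = insert z (Set.range x) := by
  rw [range_eq_insert_image_lt_last, image_snoc_lt_last, Fin.snoc_last]

end FinImages

section LengthBound

variable {R M : Type*} [CommRing R] [AddCommGroup M] [Module R M]
  {P b : Ideal R} {K : Submodule R M}

theorem sup_span_insert_smul_top (K : Submodule R M) (r : R) (s : Set R) :
    K ⊔ Ideal.span (insert r s) • (⊤ : Submodule R M) =
      K ⊔ Ideal.span s • ⊤ ⊔ Ideal.span {r} • ⊤ := by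
  rw [Ideal.span_insert, Submodule.sup_smul, sup_comm (Ideal.span {r} • ⊤), sup_assoc]

theorem IsRegularSeqAt.castSucc [P.IsPrime] {n : ℕ} {x : Fin (n + 1) → R}
    (hx : IsRegularSeqAt P K x) {z : R}
    (hz : ∀ i, IsSMulRegularAt P (K ⊔ Ideal.span (x '' {j | j < i}) • ⊤) z) :
    IsRegularSeqAt P (K ⊔ Ideal.span {z} • ⊤) (x ∘ Fin.castSucc) := by
  intro i
  have h := (hx i.castSucc).swap <| by
    rw [← sup_span_insert_smul_top, ← image_lt_succ]
    exact hz i.succ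
  rwa [image_lt_castSucc, sup_right_comm] at h

theorem HasDepthZeroAt.castSucc [P.IsPrime] {k : ℕ} {y : Fin (k + 1) → R}
    (h : HasDepthZeroAt P b (K ⊔ Ideal.span (Set.range y) • ⊤)) (hy : IsRegularSeqAt P K y)
    {z : R} (hzb : z ∈ b)
    (hz : IsSMulRegularAt P (K ⊔ Ideal.span (y '' {j | j < Fin.last k}) • ⊤) z) :
    HasDepthZeroAt P b
      (K ⊔ Ideal.span {z} • ⊤ ⊔ Ideal.span (Set.range (y ∘ Fin.castSucc)) • ⊤) := by
  rw [range_eq_insert_image_lt_last, sup_span_insert_smul_top] at h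
  have h' := h.exchange hzb (hy (Fin.last k)) hz
  rwa [image_lt_last, sup_right_comm] at h'

/-- Induction on the length of `y`: an element `z ∈ b` regular on all the quotients in sight
replaces the last term of both sequences (`IsSMulRegularAt.swap`, `HasDepthZeroAt.exchange`). -/
theorem length_le_of_hasDepthZeroAt [IsNoetherianRing R] [Module.Finite R M] [P.IsPrime]
    {k : ℕ} {y : Fin k → R} (hyb : ∀ i, y i ∈ b) (hy : IsRegularSeqAt P K y)
    (hdepth : HasDepthZeroAt P b (K ⊔ Ideal.span (Set.range y) • ⊤))
    {n : ℕ} {x : Fin n → R} (hxb : ∀ i, x i ∈ b) (hx : IsRegularSeqAt P K x) : n ≤ k := by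
  induction k generalizing K n with
  | zero =>
    cases n with
    | zero => rfl
    | succ n =>
      simp only [Set.range_eq_empty, Ideal.span_empty, Submodule.bot_smul, sup_bot_eq] at hdepth
      have hx₀ := hx 0
      simp only [Fin.not_lt_zero, Set.ofPred_false, Set.image_empty, Ideal.span_empty,
        Submodule.bot_smul, sup_bot_eq] at hx₀
      exact absurd hx₀ (hdepth.not_isSMulRegularAt (hxb 0))
  | succ k ih =>
    cases n with
    | zero => exact Nat.zero_le _
    | succ n =>
      obtain ⟨z, hzb, hz⟩ := exists_mem_forall_isSMulRegularAt (b := b) (P := P)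
        (Sum.elim (fun i : Fin (n + 1) => K ⊔ Ideal.span (x '' {j | j < i}) • ⊤)
          (fun i : Fin (k + 1) => K ⊔ Ideal.span (y '' {j | j < i}) • ⊤))
        (Sum.rec (fun i => ⟨x i, hxb i, hx i⟩) (fun i => ⟨y i, hyb i, hy i⟩))
      exact Nat.succ_le_succ <| ih (fun i => hyb _) (hy.castSucc fun i => hz (.inr i))
        (hdepth.castSucc hy hzb (hz (.inr (Fin.last k))))
        (fun i => hxb _) (hx.castSucc fun i => hz (.inl i))

end LengthBound

section FilterRegular

variable {R : Type u} [CommRing R] {a b : Ideal R} {M : Type u} [AddCommGroup M] [Module R M]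
  {n : ℕ}

theorem isFilterRegular_snoc_iff {x : Fin n → R} {z : R} :
    IsFilterRegular R a M (Fin.snoc x z) ↔ IsFilterRegular R a M x ∧
      ∀ p ∈ associatedPrimes R (M ⧸ Ideal.span (Set.range x) • (⊤ : Submodule R M)),
        ¬ a ≤ p → z ∉ p := by
  rw [IsFilterRegular, IsFilterRegular, Fin.forall_fin_succ']
  refine and_congr (forall_congr' fun i => ?_) ?_
  · rw [image_snoc_lt_castSucc, Fin.snoc_castSucc]
  · rw [image_snoc_lt_last, Fin.snoc_last]

theorem IsFilterRegular.isRegularSeqAt [IsNoetherianRing R] {P : Ideal R} [P.IsPrime]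
    (hPa : ¬ a ≤ P) {x : Fin n → R} (hx : IsFilterRegular R a M x) :
    IsRegularSeqAt P (⊥ : Submodule R M) x := by
  intro i
  rw [bot_sup_eq, isSMulRegularAt_iff]
  intro q hq hqP
  exact hx i q (by rwa [associatedPrimes_quotient]) fun haq => hPa (haq.trans hqP)

theorem exists_mem_associatedPrimes_of_maximal [IsNoetherianRing R] [Module.Finite R M]
    {x : Fin n → R} (hx : IsFilterRegular R a M x)
    (hmax : ¬ ∃ z ∈ b, IsFilterRegular R a M (Fin.snoc x z)) :
    ∃ q ∈ associatedPrimes R (M ⧸ Ideal.span (Set.range x) • (⊤ : Submodule R M)),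
      ¬ a ≤ q ∧ b ≤ q := by
  by_contra! h
  obtain ⟨z, hzb, hz⟩ := exists_mem_forall_notMem_of_finite
    ((associatedPrimes.finite R _).subset (Set.sep_subset _ fun q => ¬ a ≤ q))
    (fun q hq => hq.1.isPrime) (fun q hq => h q hq.1 hq.2)
  exact hmax ⟨z, hzb, isFilterRegular_snoc_iff.mpr ⟨hx, fun p hp hap => hz p ⟨hp, hap⟩⟩⟩

theorem length_le_of_maximal [IsNoetherianRing R] [Module.Finite R M] {k : ℕ} {y : Fin k → R}
    (hyb : ∀ i, y i ∈ b) (hy : IsFilterRegular R a M y)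
    (hmax : ¬ ∃ z ∈ b, IsFilterRegular R a M (Fin.snoc y z))
    {x : Fin n → R} (hxb : ∀ i, x i ∈ b) (hx : IsFilterRegular R a M x) : n ≤ k := by
  obtain ⟨q, hq, haq, hbq⟩ := exists_mem_associatedPrimes_of_maximal hy hmax
  rw [associatedPrimes_quotient] at hq
  have := hq.toIsPrime
  refine length_le_of_hasDepthZeroAt hyb (hy.isRegularSeqAt haq) ?_ hxb (hx.isRegularSeqAt haq)
  rw [bot_sup_eq]
  exact hasDepthZeroAt_of_mem_associatedPrimes hq hbq

theorem exists_snoc_of_support_subset [IsNoetherianRing R] [Module.Finite R M]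
    (h : Module.support R (M ⧸ (b • (⊤ : Submodule R M))) ⊆
      PrimeSpectrum.zeroLocus (a : Set R))
    {x : Fin n → R} (hx : IsFilterRegular R a M x) :
    ∃ z ∈ b, IsFilterRegular R a M (Fin.snoc x z) := by
  by_contra hmax
  obtain ⟨q, hq, haq, hbq⟩ := exists_mem_associatedPrimes_of_maximal hx hmax
  have hqM := mem_support_of_mem_associatedPrimes hq
  rw [Module.support_quotient] at hqM
  have hqb : (⟨q, hq.isPrime⟩ : PrimeSpectrum R) ∈
      Module.support R (M ⧸ b • (⊤ : Submodule R M)) := by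
    rw [Module.support_quotient]
    exact ⟨hqM.1, hbq⟩
  exact haq (h hqb)

theorem IsFilterRegular.snoc_notMem_span [IsNoetherianRing R] {y : Fin n → R} {z : R}
    (h : IsFilterRegular R a M (Fin.snoc y z)) {p : PrimeSpectrum R}
    (hp : p ∈ Module.support R (M ⧸ Ideal.span (Set.range y) • (⊤ : Submodule R M)))
    (hap : ¬ a ≤ p.asIdeal) : z ∉ Ideal.span (Set.range y) := by
  obtain ⟨q, hq, hqp⟩ := exists_mem_associatedPrimes_le_of_mem_support hp
  have hzq := (isFilterRegular_snoc_iff.mp h).2 q (by rwa [associatedPrimes_quotient])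
    fun haq => hap (haq.trans hqp)
  obtain ⟨-, m, rfl⟩ := Submodule.isAssociatedPrime_iff.mp hq
  exact fun hz => hzq (Submodule.mem_colon_singleton.mpr (Submodule.smul_mem_smul hz trivial))

/-- A sequence whose span is maximal among those of `a`-filter regular sequences in `b`
cannot be extended. -/
theorem exists_maximal_of_not_support_subset [IsNoetherianRing R] [Module.Finite R M]
    (h : ¬ Module.support R (M ⧸ (b • (⊤ : Submodule R M))) ⊆
      PrimeSpectrum.zeroLocus (a : Set R)) :
    ∃ (k : ℕ) (y : Fin k → R), (∀ i, y i ∈ b) ∧ IsFilterRegular R a M y ∧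
      ¬ ∃ z ∈ b, IsFilterRegular R a M (Fin.snoc y z) := by
  obtain ⟨p, hpb, hpa⟩ := Set.not_subset.mp h
  obtain ⟨_, ⟨k, y, hyb, hy, rfl⟩, hmax⟩ := set_has_maximal_iff_noetherian.mpr inferInstance
    {J : Ideal R | ∃ (k : ℕ) (y : Fin k → R), (∀ i, y i ∈ b) ∧ IsFilterRegular R a M y ∧
      Ideal.span (Set.range y) = J}
    ⟨_, 0, Fin.elim0, fun i => i.elim0, fun i => i.elim0, rfl⟩
  refine ⟨k, y, hyb, hy, fun ⟨z, hzb, hz⟩ => hz.snoc_notMem_span ?_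
    (fun ha => hpa ((PrimeSpectrum.mem_zeroLocus _ _).mpr ha)) ?_⟩
  · rw [Module.support_quotient] at hpb ⊢
    refine ⟨hpb.1, (PrimeSpectrum.mem_zeroLocus _ _).mpr ?_⟩
    exact (Ideal.span_le.mpr (Set.range_subset_iff.mpr hyb)).trans
      ((PrimeSpectrum.mem_zeroLocus _ _).mp hpb.2)
  · by_contra hzJ
    refine hmax _ ⟨k + 1, Fin.snoc y z, forall_snoc_mem.mpr ⟨hyb, hzb⟩, hz, rfl⟩ ?_
    rw [range_snoc]
    exact SetLike.lt_iff_le_and_exists.mpr ⟨Ideal.span_mono (Set.subset_insert _ _), z,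
      Ideal.subset_span (Set.mem_insert _ _), hzJ⟩

end FilterRegular

end Paper

/-- `Supp(M/bM) ⊆ V(a)` iff there are `a`-filter regular `M`-sequences
in `b` of every length; and if `Supp(M/bM) ⊄ V(a)`, any two maximal `a`-filter
regular `M`-sequences in `b` have the same length. -/
theorem stmt7 {R : Type u} [CommRing R] [IsNoetherianRing R] (a b : Ideal R)
    (M : Type u) [AddCommGroup M] [Module R M] [Module.Finite R M] :
    (Module.support R (M ⧸ (b • (⊤ : Submodule R M))) ⊆
        PrimeSpectrum.zeroLocus (a : Set R) ↔
      ∀ n : ℕ, ∃ x : Fin n → R, (∀ i, x i ∈ b) ∧ Paper.IsFilterRegular R a M x) ∧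
    (¬ Module.support R (M ⧸ (b • (⊤ : Submodule R M))) ⊆
        PrimeSpectrum.zeroLocus (a : Set R) →
      ∀ (m k : ℕ) (x : Fin m → R) (y : Fin k → R),
        (∀ i, x i ∈ b) → Paper.IsFilterRegular R a M x →
        (¬ ∃ z ∈ b, Paper.IsFilterRegular R a M (Fin.snoc x z)) →
        (∀ i, y i ∈ b) → Paper.IsFilterRegular R a M y →
        (¬ ∃ z ∈ b, Paper.IsFilterRegular R a M (Fin.snoc y z)) →
        m = k) := by
  refine ⟨⟨fun h n => ?_, fun h => ?_⟩, fun _ m k x y hxb hx hxmax hyb hy hymax => ?_⟩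
  · induction n with
    | zero => exact ⟨Fin.elim0, fun i => i.elim0, fun i => i.elim0⟩
    | succ n ih =>
      obtain ⟨x, hxb, hx⟩ := ih
      obtain ⟨z, hzb, hz⟩ := exists_snoc_of_support_subset h hx
      exact ⟨Fin.snoc x z, forall_snoc_mem.mpr ⟨hxb, hzb⟩, hz⟩
  · by_contra hsupp
    obtain ⟨k, y, hyb, hy, hmax⟩ := exists_maximal_of_not_support_subset hsupp
    obtain ⟨x, hxb, hx⟩ := h (k + 1)
    exact (length_le_of_maximal hyb hy hmax hxb hx).not_gt k.lt_succ_self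
  · exact le_antisymm (length_le_of_maximal hyb hy hymax hxb hx)
      (length_le_of_maximal hxb hx hxmax hyb hy)
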